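/- arXiv:1009.5730 — 5 statements merged into one kernel-verified Lean document; each statement's English description precedes it below -/
import Mathlib

section
/- The Steiner matrix F is a tight frame: F·Fᴴ = k·(1 + (k−1)/(v−1))·I, where the identity matrix is indexed by 𝓑. In particular the rows of F are orthogonal and each has squared norm equal to the redundancy N/M = k(1 + (k−1)/(v−1)), with N = v(1 + (v−1)/(k−1)) and M = |𝓑| = v(v−1)/(k(k−1)). -/
/-!
Entry `(B, B')` of `F Fᴴ` is a sum over the common points `x` of `B` and `B'` of
`(k-1)/(v-1)` times the inner product of the rows `φ_x B` and `φ_x B'` of `H_x`. For `B ≠ B'`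
these are distinct rows (injectivity of `φ_x`), hence orthogonal; for `B = B'` each of the `k`
points of `B` contributes `(k-1)/(v-1) · (r+1)`, which is `1 + (k-1)/(v-1)` because
`r (k-1) = v-1`.
-/

open Matrix Finset

section BlockFrame

variable {ι V ρ κ 𝕜 : Type*} [Fintype V] [DecidableEq V] [Fintype κ] [CommRing 𝕜] [StarRing 𝕜]

def blockFrame (blk : ι → Finset V) (H : V → Matrix ρ κ 𝕜) (φ : V → ι → ρ) (c : 𝕜) :
    Matrix ι (V × κ) 𝕜 :=
  of fun b p => if p.1 ∈ blk b then c * H p.1 (φ p.1 b) p.2 else 0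

theorem blockFrame_mul_conjTranspose_apply (blk : ι → Finset V) (H : V → Matrix ρ κ 𝕜)
    (φ : V → ι → ρ) (c : 𝕜) (b b' : ι) :
    (blockFrame blk H φ c * (blockFrame blk H φ c)ᴴ) b b' =
      ∑ x ∈ blk b ∩ blk b', c * star c * (H x * (H x)ᴴ) (φ x b) (φ x b') := by
  rw [mul_apply, Fintype.sum_prod_type, ← univ_inter (blk b ∩ blk b'),
    ← sum_ite_mem]
  refine sum_congr rfl fun x _ => ?_
  simp only [blockFrame, conjTranspose_apply, of_apply, mul_apply, mem_inter,
    mul_sum]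
  split_ifs <;> simp_all [mul_mul_mul_comm, star_mul']

theorem blockFrame_mul_conjTranspose [DecidableEq ι] [DecidableEq ρ] {blk : ι → Finset V}
    {H : V → Matrix ρ κ 𝕜} {φ : V → ι → ρ} (c : 𝕜) {a : 𝕜} (hH : ∀ x, H x * (H x)ᴴ = a • 1)
    (hφ : ∀ x, Set.InjOn (φ x) {b | x ∈ blk b}) :
    blockFrame blk H φ c * (blockFrame blk H φ c)ᴴ =
      diagonal fun b => c * star c * a * #(blk b) := by
  ext b b'
  rw [blockFrame_mul_conjTranspose_apply]
  obtain rfl | hbb' := eq_or_ne b b'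
  · simp [hH, mul_comm]
  · rw [diagonal_apply_ne _ hbb']
    refine sum_eq_zero fun x hx => ?_
    rw [mem_inter] at hx
    have hφbb' : φ x b ≠ φ x b' := fun h => hbb' (hφ x hx.1 hx.2 h)
    simp [hH, hφbb']

end BlockFrame

theorem div_mul_add_one_eq_one_add_div {K : Type*} [Field K] {m n r : K} (hn : n ≠ 0)
    (h : r * m = n) : m / n * (r + 1) = 1 + m / n := by
  field_simp
  linear_combination h

theorem steiner_matrix_tight_general {V : Type*} [Fintype V] [DecidableEq V] (k v r : ℕ)
    (hk : 2 ≤ k) (hkv : k < v)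
    (𝓑 : Finset (Finset V))
    (hsize : ∀ B ∈ 𝓑, B.card = k)
    (hr : r * (k - 1) = v - 1)
    (H : V → Matrix (Fin (r + 1)) (Fin (r + 1)) ℂ)
    (hHorth : ∀ x, H x * (H x)ᴴ = ((r : ℂ) + 1) • 1)
    (φ : V → Finset V → Fin (r + 1))
    (hφ : ∀ x : V, Set.InjOn (φ x) {B : Finset V | B ∈ 𝓑 ∧ x ∈ B})
    (F : Matrix (↥𝓑) (V × Fin (r + 1)) ℂ)
    (hF : ∀ (B : ↥𝓑) (p : V × Fin (r + 1)),
      F B p = if p.1 ∈ (B : Finset V)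
        then (Real.sqrt (((k : ℝ) - 1) / ((v : ℝ) - 1)) : ℂ)
              * H p.1 (φ p.1 (B : Finset V)) p.2
        else 0) :
    F * Fᴴ = ((k : ℂ) * (1 + ((k : ℂ) - 1) / ((v : ℂ) - 1))) • 1 := by
  set c : ℂ := (Real.sqrt (((k : ℝ) - 1) / ((v : ℝ) - 1)) : ℂ)
  have hF' : F = blockFrame (fun B : 𝓑 => (B : Finset V)) H (fun x B => φ x B) c := by
    ext B p
    exact hF B p
  have hinj : ∀ x, Set.InjOn (fun B : 𝓑 => φ x B) {B | x ∈ (B : Finset V)} :=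
    fun x B hB B' hB' h => Subtype.ext (hφ x ⟨B.2, hB⟩ ⟨B'.2, hB'⟩ h)
  have hv : (2 : ℝ) ≤ v := by exact_mod_cast hk.trans hkv.le
  have hcc : c * star c = ((k : ℂ) - 1) / ((v : ℂ) - 1) := by
    have hk' : (1 : ℝ) ≤ k := by exact_mod_cast one_le_two.trans hk
    rw [Complex.star_def, Complex.conj_ofReal, ← Complex.ofReal_mul,
      Real.mul_self_sqrt (div_nonneg (by linarith) (by linarith))]
    push_cast
    rfl
  have hrC : (r : ℂ) * ((k : ℂ) - 1) = (v : ℂ) - 1 := by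
    have := congrArg (Nat.cast (R := ℂ)) hr
    push_cast [Nat.cast_sub (by omega : 1 ≤ k), Nat.cast_sub (by omega : 1 ≤ v)] at this
    exact this
  have hvC : (v : ℂ) - 1 ≠ 0 := by exact_mod_cast (by linarith : (v : ℝ) - 1 ≠ 0)
  rw [hF', blockFrame_mul_conjTranspose c hHorth hinj, smul_one_eq_diagonal]
  congr 1
  ext B
  rw [hcc, div_mul_add_one_eq_one_add_div hvC hrC, hsize B B.2, mul_comm]

/-- The Steiner matrix F built from a (2,k,v)-Steiner system and unimodular
matrices H_x with orthogonal rows is a tight frame: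
F·Fᴴ = k·(1 + (k−1)/(v−1))·I, the identity being indexed by the blocks 𝓑. -/
theorem steiner_matrix_tight {V : Type*} [Fintype V] [DecidableEq V] (k v r : ℕ)
    (hk : 2 ≤ k) (hkv : k < v) (hcard : Fintype.card V = v)
    (𝓑 : Finset (Finset V))
    (hsize : ∀ B ∈ 𝓑, B.card = k)
    (hpair : ∀ x y : V, x ≠ y → ∃! B, B ∈ 𝓑 ∧ x ∈ B ∧ y ∈ B)
    (hr : r * (k - 1) = v - 1)
    (H : V → Matrix (Fin (r + 1)) (Fin (r + 1)) ℂ)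
    (hHuni : ∀ x i j, ‖H x i j‖ = 1)
    (hHorth : ∀ x, H x * (H x)ᴴ = ((r : ℂ) + 1) • 1)
    (φ : V → Finset V → Fin (r + 1))
    (hφ : ∀ x : V, Set.InjOn (φ x) {B : Finset V | B ∈ 𝓑 ∧ x ∈ B})
    (F : Matrix (↥𝓑) (V × Fin (r + 1)) ℂ)
    (hF : ∀ (B : ↥𝓑) (p : V × Fin (r + 1)),
      F B p = if p.1 ∈ (B : Finset V)
        then (Real.sqrt (((k : ℝ) - 1) / ((v : ℝ) - 1)) : ℂ)
              * H p.1 (φ p.1 (B : Finset V)) p.2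
        else 0) :
    F * Fᴴ = ((k : ℂ) * (1 + ((k : ℂ) - 1) / ((v : ℂ) - 1))) • 1 :=
  steiner_matrix_tight_general k v r hk hkv 𝓑 hsize hr H hHorth φ hφ F hF
end

section
/- The Steiner matrix F is equiangular: for any two distinct column indices (x,i) ≠ (x',i') in V × Fin(r+1), the inner product of the corresponding columns of F has modulus exactly (k−1)/(v−1), i.e., |Σ_{B ∈ 𝓑} conj(F(B,(x,i)))·F(B,(x',i'))| = (k−1)/(v−1). -/
/-!
Two columns `(x, i)`, `(x', i')` of `F` with `x ≠ x'` overlap only in the unique block through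
`x` and `x'`, where the product of two unimodular entries of `H` is scaled by `(k-1)/(v-1)`.
If `x = x'` and `i ≠ i'`, the `r` blocks through `x` are sent by `φ x` to all rows of `H x` but
one; the columns of `H x` being orthogonal, the sum over these rows is minus the term of the
missing row, which again has modulus one.
-/

open Matrix Finset

namespace Matrix

variable {n K : Type*} [Fintype n] [DecidableEq n]

theorem conjTranspose_mul_self_eq_smul_one [Field K] [StarRing K] {H : Matrix n n K} {c : K}
    (hc : c ≠ 0) (h : H * Hᴴ = c • 1) : Hᴴ * H = c • 1 := by
  have hinv : (c⁻¹ • Hᴴ) * H = 1 :=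
    mul_eq_one_comm.mp (by rw [Matrix.mul_smul, h, smul_smul, inv_mul_cancel₀ hc, one_smul])
  calc Hᴴ * H = c • ((c⁻¹ • Hᴴ) * H) := by
        rw [Matrix.smul_mul, smul_smul, mul_inv_cancel₀ hc, one_smul]
    _ = c • 1 := by rw [hinv]

theorem sum_star_mul_eq_zero_of_mul_conjTranspose_eq_smul_one [Field K] [StarRing K]
    {H : Matrix n n K} {c : K} (hc : c ≠ 0) (h : H * Hᴴ = c • 1) {i j : n} (hij : i ≠ j) :
    ∑ m, star (H m i) * H m j = 0 := by
  simpa [Matrix.mul_apply, Matrix.one_apply_ne hij] using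
    congrFun₂ (conjTranspose_mul_self_eq_smul_one hc h) i j

theorem norm_sum_star_mul_eq_one [RCLike K] {H : Matrix n n K} {c : K} (hc : c ≠ 0)
    (h : H * Hᴴ = c • 1) (hH : ∀ i j, ‖H i j‖ = 1) {T : Finset n}
    (hT : #T + 1 = Fintype.card n) {i j : n} (hij : i ≠ j) :
    ‖∑ m ∈ T, star (H m i) * H m j‖ = 1 := by
  -- `T` misses a single row `m₀`, so the sum over `T` is minus the `m₀`-term of a vanishing sum.
  obtain ⟨m₀, hm₀⟩ : ∃ m₀, Tᶜ = {m₀} := card_eq_one.mp (by rw [card_compl]; omega)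
  have hsplit := sum_add_sum_compl T (fun m => star (H m i) * H m j)
  rw [hm₀, sum_singleton, sum_star_mul_eq_zero_of_mul_conjTranspose_eq_smul_one hc h hij,
    ← eq_neg_iff_add_eq_zero] at hsplit
  rw [hsplit, norm_neg, norm_mul, norm_star, hH, hH, one_mul]

end Matrix

section LinearSpace

variable {V : Type*} [DecidableEq V] {𝓑 : Finset (Finset V)}

theorem exists_filter_mem_and_mem_eq_singleton
    (hpair : ∀ x y : V, x ≠ y → ∃! B, B ∈ 𝓑 ∧ x ∈ B ∧ y ∈ B) {x y : V} (hxy : x ≠ y) :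
    ∃ B₀, {B ∈ 𝓑 | x ∈ B ∧ y ∈ B} = {B₀} :=
  (singleton_iff_unique_mem _).2 (by simpa using hpair x y hxy)

/-- Double counting of the pairs `(B, y)` with `x, y ∈ B` and `y ≠ x`. -/
theorem card_filter_mem_mul_pred [Fintype V] {k : ℕ} (hsize : ∀ B ∈ 𝓑, #B = k)
    (hpair : ∀ x y : V, x ≠ y → ∃! B, B ∈ 𝓑 ∧ x ∈ B ∧ y ∈ B) (x : V) :
    #{B ∈ 𝓑 | x ∈ B} * (k - 1) = Fintype.card V - 1 := by
  have := card_mul_eq_card_mul (fun B y => y ∈ B) (s := {B ∈ 𝓑 | x ∈ B}) (t := univ.erase x)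
    (m := k - 1) (n := 1) ?_ ?_
  · rwa [card_erase_of_mem (mem_univ x), card_univ, mul_one] at this
  · intro B hB
    rw [mem_filter] at hB
    have : (univ.erase x).bipartiteAbove (fun B y => y ∈ B) B = B.erase x := by
      ext y; simp [bipartiteAbove, and_comm]
    rw [this, card_erase_of_mem hB.2, hsize B hB.1]
  · intro y hy
    obtain ⟨B₀, hB₀⟩ := exists_filter_mem_and_mem_eq_singleton hpair (ne_of_mem_erase hy).symm
    rw [bipartiteBelow, filter_filter, hB₀, card_singleton]

theorem card_filter_mem_eq [Fintype V] {k r : ℕ} (hk : 2 ≤ k) (hsize : ∀ B ∈ 𝓑, #B = k)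
    (hpair : ∀ x y : V, x ≠ y → ∃! B, B ∈ 𝓑 ∧ x ∈ B ∧ y ∈ B)
    (hr : r * (k - 1) = Fintype.card V - 1) (x : V) :
    #{B ∈ 𝓑 | x ∈ B} = r :=
  Nat.eq_of_mul_eq_mul_right (by omega : 0 < k - 1) <| by
    rw [card_filter_mem_mul_pred hsize hpair x, hr]

end LinearSpace

theorem Complex.conj_ite_ofReal_mul_mul_ite_ofReal_mul (c : ℝ) (P Q : Prop) [Decidable P]
    [Decidable Q] (a b : ℂ) :
    starRingEnd ℂ (if P then (c : ℂ) * a else 0) * (if Q then (c : ℂ) * b else 0) =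
      if P ∧ Q then ((c * c : ℝ) : ℂ) * (star a * b) else 0 := by
  by_cases hP : P <;> by_cases hQ : Q <;>
    simp only [hP, hQ, ↓reduceIte, map_mul, map_zero, Complex.conj_ofReal, Complex.ofReal_mul,
      RCLike.star_def, and_self, and_true, and_false, mul_zero, zero_mul]
  ring

/-- The Steiner matrix F is equiangular: the inner product of any two distinct
columns of F has modulus exactly (k−1)/(v−1). -/
theorem steiner_matrix_equiangular {V : Type*} [Fintype V] [DecidableEq V] (k v r : ℕ)
    (hk : 2 ≤ k) (hkv : k < v) (hcard : Fintype.card V = v)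
    (𝓑 : Finset (Finset V))
    (hsize : ∀ B ∈ 𝓑, B.card = k)
    (hpair : ∀ x y : V, x ≠ y → ∃! B, B ∈ 𝓑 ∧ x ∈ B ∧ y ∈ B)
    (hr : r * (k - 1) = v - 1)
    (H : V → Matrix (Fin (r + 1)) (Fin (r + 1)) ℂ)
    (hHuni : ∀ x i j, ‖H x i j‖ = 1)
    (hHorth : ∀ x, H x * (H x)ᴴ = ((r : ℂ) + 1) • 1)
    (φ : V → Finset V → Fin (r + 1))
    (hφ : ∀ x : V, Set.InjOn (φ x) {B : Finset V | B ∈ 𝓑 ∧ x ∈ B})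
    (F : Matrix (↥𝓑) (V × Fin (r + 1)) ℂ)
    (hF : ∀ (B : ↥𝓑) (p : V × Fin (r + 1)),
      F B p = if p.1 ∈ (B : Finset V)
        then (Real.sqrt (((k : ℝ) - 1) / ((v : ℝ) - 1)) : ℂ)
              * H p.1 (φ p.1 (B : Finset V)) p.2
        else 0) :
    ∀ p p' : V × Fin (r + 1), p ≠ p' →
      ‖∑ B : ↥𝓑, (starRingEnd ℂ) (F B p) * F B p'‖
        = ((k : ℝ) - 1) / ((v : ℝ) - 1) := by
  rintro ⟨x, i⟩ ⟨x', i'⟩ hne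
  have hq : 0 ≤ ((k : ℝ) - 1) / ((v : ℝ) - 1) := by
    have : (2 : ℝ) ≤ k := by exact_mod_cast hk
    have : (k : ℝ) < v := by exact_mod_cast hkv
    exact div_nonneg (by linarith) (by linarith)
  have hsum : ∑ B : ↥𝓑, (starRingEnd ℂ) (F B (x, i)) * F B (x', i') =
      (((k : ℝ) - 1) / ((v : ℝ) - 1) : ℝ) *
        ∑ B ∈ 𝓑 with x ∈ B ∧ x' ∈ B, star (H x (φ x B) i) * H x' (φ x' B) i' := by
    rw [mul_sum, sum_filter, ← sum_coe_sort 𝓑]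
    refine Fintype.sum_congr _ _ fun B => ?_
    rw [hF, hF, Complex.conj_ite_ofReal_mul_mul_ite_ofReal_mul, Real.mul_self_sqrt hq]
  rw [hsum, norm_mul, Complex.norm_real, Real.norm_of_nonneg hq]
  suffices ‖∑ B ∈ 𝓑 with x ∈ B ∧ x' ∈ B, star (H x (φ x B) i) * H x' (φ x' B) i'‖ = 1 by
    rw [this, mul_one]
  rcases eq_or_ne x x' with rfl | hxx'
  · have hii' : i ≠ i' := fun h => hne (by rw [h])
    have hinj : Set.InjOn (φ x) ↑{B ∈ 𝓑 | x ∈ B} := fun B hB B' hB' =>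
      hφ x (by simpa using hB) (by simpa using hB')
    simp only [and_self]
    rw [← sum_image (f := fun m => star (H x m i) * H x m i') hinj]
    refine norm_sum_star_mul_eq_one (by norm_cast) (hHorth x) (hHuni x) ?_ hii'
    rw [card_image_of_injOn hinj, card_filter_mem_eq hk hsize hpair (hcard ▸ hr), Fintype.card_fin]
  · obtain ⟨B₀, hB₀⟩ := exists_filter_mem_and_mem_eq_singleton hpair hxx'
    rw [hB₀, sum_singleton, norm_mul, norm_star, hHuni, hHuni, one_mul]
end

section
/- Let F be an M×N complex matrix whose columns f_1,…,f_N are unit vectors satisfying |⟨f_n, f_{n'}⟩| ≤ μ for all n ≠ n'. Then for every subset 𝒦 of column indices with |𝒦| = K ≥ 1, every eigenvalue λ of the Hermitian matrix (F_𝒦)ᴴ·F_𝒦 (where F_𝒦 is the submatrix of F with columns indexed by 𝒦) satisfies |λ − 1| ≤ (K−1)·μ. Consequently, if (K−1)·μ ≤ δ, then F has the (K,δ)-restricted isometry property. -/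
open Matrix

/-- An `M × N` complex matrix `F` has the `(K,δ)`-restricted isometry property if
`(1−δ)‖g‖² ≤ ‖F·g‖² ≤ (1+δ)‖g‖²` for every vector `g` with at most `K` nonzero
entries. -/
def HasRIP {m n : Type*} [Fintype m] [Fintype n] (F : Matrix m n ℂ)
    (K : ℕ) (δ : ℝ) : Prop :=
  ∀ g : n → ℂ, (∃ s : Finset n, s.card ≤ K ∧ ∀ j ∉ s, g j = 0) →
    (1 - δ) * ∑ j, ‖g j‖ ^ 2 ≤ ∑ i, ‖F.mulVec g i‖ ^ 2 ∧
    ∑ i, ‖F.mulVec g i‖ ^ 2 ≤ (1 + δ) * ∑ j, ‖g j‖ ^ 2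

/-! The Gram matrix `Fᴴ F` of unit columns with coherence `μ` has unit diagonal and off-diagonal
entries of modulus at most `μ`, and so does each of its principal `K × K` submatrices, the Gram
matrix of `K` columns. Gershgorin's theorem places every eigenvalue of such a matrix within
`(K - 1) μ` of `1`. For a `K`-sparse `g`, `‖F g‖² - ‖g‖²` is the quadratic form of `Fᴴ F - 1`
at `g`; its modulus is at most `μ ((∑ |gⱼ|)² - ∑ |gⱼ|²)`, and Cauchy–Schwarz bounds this by
`(K - 1) μ ‖g‖²`. -/

open Finset

section OffDiagonalBounds

variable {ι 𝕜 : Type*} [Fintype ι] [DecidableEq ι]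

theorem Matrix.norm_sub_le_of_mem_spectrum_of_offDiag_le [NormedField 𝕜]
    {A : Matrix ι ι 𝕜} {c z : 𝕜} {μ : ℝ} (hdiag : ∀ i, A i i = c)
    (hoff : ∀ i j, i ≠ j → ‖A i j‖ ≤ μ) (hz : z ∈ spectrum 𝕜 A) :
    ‖z - c‖ ≤ (Fintype.card ι - 1) * μ := by
  obtain ⟨k, hk⟩ := eigenvalue_mem_ball (A := A)
    (Module.End.HasEigenvalue.of_mem_spectrum (by rwa [Matrix.spectrum_toLin']))
  rw [mem_closedBall_iff_norm, hdiag] at hk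
  have hcard : 1 ≤ Fintype.card ι := Fintype.card_pos_iff.mpr ⟨k⟩
  calc ‖z - c‖ ≤ ∑ j ∈ univ.erase k, ‖A k j‖ := hk
    _ ≤ ∑ _j ∈ univ.erase k, μ := sum_le_sum fun j hj => hoff k j (ne_of_mem_erase hj).symm
    _ = (Fintype.card ι - 1) * μ := by
      rw [sum_const, card_erase_of_mem (mem_univ k), card_univ, nsmul_eq_mul,
        Nat.cast_sub hcard, Nat.cast_one]

theorem Matrix.norm_star_dotProduct_mulVec_le_of_offDiag_le [RCLike 𝕜] {B : Matrix ι ι 𝕜}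
    {μ : ℝ} (hμ : 0 ≤ μ) (hdiag : ∀ i, B i i = 0) (hoff : ∀ i j, i ≠ j → ‖B i j‖ ≤ μ)
    (x : ι → 𝕜) :
    ‖star x ⬝ᵥ B *ᵥ x‖ ≤ (Fintype.card ι - 1) * μ * ∑ i, ‖x i‖ ^ 2 := by
  have hentry : ∀ i j, ‖x i‖ * ‖B i j‖ * ‖x j‖ ≤
      μ * (‖x i‖ * ‖x j‖) - if i = j then μ * ‖x i‖ ^ 2 else 0 := by
    intro i j
    split_ifs with hij
    · subst hij
      simp [hdiag, sq]
    · rw [sub_zero, mul_right_comm, mul_comm μ]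
      exact mul_le_mul_of_nonneg_left (hoff i j hij) (by positivity)
  have hcs : (∑ i, ‖x i‖) ^ 2 ≤ Fintype.card ι * ∑ i, ‖x i‖ ^ 2 := by
    simpa using sq_sum_le_card_mul_sum_sq (s := univ) (f := fun i => ‖x i‖)
  calc ‖star x ⬝ᵥ B *ᵥ x‖ ≤ ∑ i, ∑ j, ‖x i‖ * ‖B i j‖ * ‖x j‖ := by
        simp only [dotProduct, Matrix.mulVec, mul_sum]
        refine (norm_sum_le _ _).trans (sum_le_sum fun i _ => (norm_sum_le _ _).trans_eq ?_)
        simp only [norm_mul, Pi.star_apply, norm_star, mul_assoc]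
    _ ≤ ∑ i, ∑ j, (μ * (‖x i‖ * ‖x j‖) - if i = j then μ * ‖x i‖ ^ 2 else 0) :=
        sum_le_sum fun i _ => sum_le_sum fun j _ => hentry i j
    _ = μ * ((∑ i, ‖x i‖) ^ 2 - ∑ i, ‖x i‖ ^ 2) := by
        simp only [sum_sub_distrib, sum_ite_eq, mem_univ, if_true, ← mul_sum, sq, sum_mul_sum]
        ring
    _ ≤ (Fintype.card ι - 1) * μ * ∑ i, ‖x i‖ ^ 2 := by
        linarith [mul_le_mul_of_nonneg_left hcs hμ]

end OffDiagonalBounds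

section Gram

variable {m n 𝕜 : Type*} [Fintype m] [RCLike 𝕜]

theorem Matrix.star_dotProduct_self_eq (v : m → 𝕜) :
    star v ⬝ᵥ v = ((∑ i, ‖v i‖ ^ 2 : ℝ) : 𝕜) := by
  simp only [dotProduct, Pi.star_apply, RCLike.star_def, RCLike.conj_mul, RCLike.ofReal_sum,
    RCLike.ofReal_pow]

theorem Matrix.conjTranspose_mul_self_apply (F : Matrix m n 𝕜) (i j : n) :
    (Fᴴ * F) i j = star (fun k => F k i) ⬝ᵥ fun k => F k j :=
  rfl

theorem Matrix.conjTranspose_mul_self_submatrix {p : Type*} [Fintype n] (F : Matrix m n 𝕜)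
    (e : p → n) : (F.submatrix id e)ᴴ * F.submatrix id e = (Fᴴ * F).submatrix e e := by
  rw [conjTranspose_submatrix, submatrix_mul _ _ _ _ _ Function.bijective_id]

theorem Matrix.star_dotProduct_conjTranspose_mul_self_mulVec [Fintype n] (F : Matrix m n 𝕜)
    (x : n → 𝕜) : star x ⬝ᵥ (Fᴴ * F) *ᵥ x = star (F *ᵥ x) ⬝ᵥ F *ᵥ x := by
  rw [star_mulVec, ← dotProduct_mulVec, mulVec_mulVec]

theorem Matrix.abs_sum_norm_mulVec_sq_sub_le [Fintype n] [DecidableEq n] {F : Matrix m n 𝕜}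
    {μ : ℝ} (hμ : 0 ≤ μ) (hdiag : ∀ j, (Fᴴ * F) j j = 1)
    (hoff : ∀ i j, i ≠ j → ‖(Fᴴ * F) i j‖ ≤ μ) (x : n → 𝕜) :
    |∑ i, ‖(F *ᵥ x) i‖ ^ 2 - ∑ j, ‖x j‖ ^ 2| ≤ (Fintype.card n - 1) * μ * ∑ j, ‖x j‖ ^ 2 := by
  have key := norm_star_dotProduct_mulVec_le_of_offDiag_le (B := Fᴴ * F - 1) hμ
    (fun j => by simp [hdiag]) (fun i j hij => by simpa [one_apply_ne hij] using hoff i j hij) x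
  rwa [sub_mulVec, one_mulVec, dotProduct_sub, star_dotProduct_conjTranspose_mul_self_mulVec,
    star_dotProduct_self_eq, star_dotProduct_self_eq, ← RCLike.ofReal_sub,
    RCLike.norm_ofReal] at key

end Gram

theorem Finset.sum_coe_sort_eq_sum_univ {ι M : Type*} [Fintype ι] [AddCommMonoid M]
    {f : ι → M} {s : Finset ι} (hf : ∀ i ∉ s, f i = 0) : ∑ i : s, f i = ∑ i, f i :=
  (sum_coe_sort s f).trans (sum_subset (subset_univ s) fun i _ hi => hf i hi)

theorem hasRIP_of_conjTranspose_mul_self {m n : Type*} [Fintype m] [Fintype n] [DecidableEq n]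
    {F : Matrix m n ℂ} {μ δ : ℝ} {K : ℕ} (hμ : 0 ≤ μ) (hdiag : ∀ j, (Fᴴ * F) j j = 1)
    (hoff : ∀ i j, i ≠ j → ‖(Fᴴ * F) i j‖ ≤ μ) (hδ : ((K : ℝ) - 1) * μ ≤ δ) :
    HasRIP F K δ := by
  rintro g ⟨s, hs, hg⟩
  let x : s → ℂ := fun j => g j
  have hFg : F *ᵥ g = F.submatrix id (↑) *ᵥ x := funext fun i =>
    (sum_coe_sort_eq_sum_univ (f := fun j => F i j * g j) fun j hj => by simp [hg j hj]).symm
  have hg_norm : ∑ j, ‖g j‖ ^ 2 = ∑ j, ‖x j‖ ^ 2 :=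
    (sum_coe_sort_eq_sum_univ (f := fun j => ‖g j‖ ^ 2) fun j hj => by simp [hg j hj]).symm
  have hcard : ((Fintype.card s : ℝ) - 1) * μ ≤ δ := by
    rw [Fintype.card_coe]
    exact le_trans (mul_le_mul_of_nonneg_right (sub_le_sub_right (Nat.cast_le.mpr hs) 1) hμ) hδ
  have hdev := abs_sum_norm_mulVec_sq_sub_le (F := F.submatrix id (↑)) hμ
    (by rw [conjTranspose_mul_self_submatrix]; exact fun j => hdiag j)
    (by rw [conjTranspose_mul_self_submatrix]
        exact fun i j hij => hoff i j (Subtype.coe_injective.ne hij)) x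
  have hbound := hdev.trans (mul_le_mul_of_nonneg_right hcard (by positivity))
  rw [hFg, hg_norm]
  constructor <;> linarith [abs_le.mp hbound]

theorem coherence_implies_rip_general (M N K : ℕ)
    (μ : ℝ) (hμ : 0 ≤ μ)
    (F : Matrix (Fin M) (Fin N) ℂ)
    (hcol : ∀ n, ∑ m, ‖F m n‖ ^ 2 = 1)
    (hcoh : ∀ n n', n ≠ n' →
      ‖∑ m, (starRingEnd ℂ) (F m n) * F m n'‖ ≤ μ) :
    (∀ 𝒦 : Finset (Fin N), 𝒦.card = K →
      ∀ lam : ℝ,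
        (lam : ℂ) ∈ spectrum ℂ
          ((F.submatrix id (fun i : ↥𝒦 => (i : Fin N)))ᴴ
            * F.submatrix id (fun i : ↥𝒦 => (i : Fin N))) →
        |lam - 1| ≤ ((K : ℝ) - 1) * μ) ∧
    ∀ δ : ℝ, ((K : ℝ) - 1) * μ ≤ δ → HasRIP F K δ := by
  have hdiag : ∀ n, (Fᴴ * F) n n = 1 := fun n => by
    rw [conjTranspose_mul_self_apply, star_dotProduct_self_eq, hcol, RCLike.ofReal_one]
  have hoff : ∀ n n', n ≠ n' → ‖(Fᴴ * F) n n'‖ ≤ μ := hcoh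
  refine ⟨fun 𝒦 h𝒦 lam hlam => ?_, fun δ => hasRIP_of_conjTranspose_mul_self hμ hdiag hoff⟩
  rw [conjTranspose_mul_self_submatrix] at hlam
  have hgersh := norm_sub_le_of_mem_spectrum_of_offDiag_le (fun k => by exact hdiag k)
    (fun k j hkj => by exact hoff k j (Subtype.coe_injective.ne hkj)) hlam
  rwa [Fintype.card_coe, h𝒦, ← Complex.ofReal_one, ← Complex.ofReal_sub, Complex.norm_real,
    Real.norm_eq_abs] at hgersh

/-- If the columns f₁,…,f_N of F are unit vectors with worst-case coherence at
most μ, then for every K-element set 𝒦 of columns every eigenvalue λ of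
(F_𝒦)ᴴ·F_𝒦 satisfies |λ − 1| ≤ (K−1)μ (Gershgorin); consequently, if
(K−1)μ ≤ δ then F has the (K,δ)-restricted isometry property. -/
theorem coherence_implies_rip (M N K : ℕ) (hK : 1 ≤ K)
    (μ : ℝ) (hμ : 0 ≤ μ)
    (F : Matrix (Fin M) (Fin N) ℂ)
    (hcol : ∀ n, ∑ m, ‖F m n‖ ^ 2 = 1)
    (hcoh : ∀ n n', n ≠ n' →
      ‖∑ m, (starRingEnd ℂ) (F m n) * F m n'‖ ≤ μ) :
    (∀ 𝒦 : Finset (Fin N), 𝒦.card = K →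
      ∀ lam : ℝ,
        (lam : ℂ) ∈ spectrum ℂ
          ((F.submatrix id (fun i : ↥𝒦 => (i : Fin N)))ᴴ
            * F.submatrix id (fun i : ↥𝒦 => (i : Fin N))) →
        |lam - 1| ≤ ((K : ℝ) - 1) * μ) ∧
    ∀ δ : ℝ, ((K : ℝ) - 1) * μ ≤ δ → HasRIP F K δ :=
  coherence_implies_rip_general M N K μ hμ F hcol hcoh
end

section
/- Fix 0 ≤ δ < 1 and let f_1,…,f_N be an equiangular tight frame in ℂ^M with M < N: each ‖f_n‖ = 1, |⟨f_n, f_{n'}⟩| = ((N−M)/(M(N−1)))^{1/2} for all n ≠ n', and the matrix F with columns f_n satisfies F·Fᴴ = (N/M)·I. Then F has the (K,δ)-restricted isometry property for every positive integer K with K ≤ 1 + δ·(M(N−1)/(N−M))^{1/2}. -/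
/-! The Gram matrix `Fᴴ * F` of the frame has unit diagonal and off-diagonal entries of modulus
`μ = ((N−M)/(M(N−1)))^(1/2)`. For `g` supported on `K` coordinates,
`‖F g‖² − ‖g‖² = gᴴ (Fᴴ F − 1) g` is bounded in modulus by
`μ ((∑ |g j|)² − ∑ |g j|²) ≤ μ (K − 1) ‖g‖²` (Cauchy–Schwarz), and the bound on `K` says exactly
that `μ (K − 1) ≤ δ`. -/

open Matrix

lemma Real.sqrt_mul_sqrt_inv_le_one (x : ℝ) : √x * √x⁻¹ ≤ 1 := by
  rcases le_total 0 x with hx | hx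
  · rw [← Real.sqrt_mul hx]
    exact Real.sqrt_le_one.mpr mul_inv_le_one
  · rw [Real.sqrt_eq_zero'.mpr hx, zero_mul]
    exact zero_le_one

lemma Finset.sq_sum_le_card_mul_sum_sq_of_support {ι : Type*} [Fintype ι] {s : Finset ι}
    {f : ι → ℝ} (hf : ∀ j ∉ s, f j = 0) : (∑ j, f j) ^ 2 ≤ s.card * ∑ j, f j ^ 2 := by
  rw [← Finset.sum_subset (s.subset_univ) fun j _ hj => hf j hj,
    ← Finset.sum_subset (s.subset_univ) fun j _ hj => by simp [hf j hj]]
  exact sq_sum_le_card_mul_sum_sq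

namespace Matrix

variable {m n : Type*}

lemma star_dotProduct_self_eq_sum_norm_sq [Fintype n] (v : n → ℂ) :
    star v ⬝ᵥ v = ((∑ j, ‖v j‖ ^ 2 : ℝ) : ℂ) := by
  simp [dotProduct, Complex.conj_mul']

lemma conjTranspose_mul_self_apply_self [Fintype m] (F : Matrix m n ℂ) (j : n) :
    (Fᴴ * F) j j = ((∑ i, ‖F i j‖ ^ 2 : ℝ) : ℂ) :=
  star_dotProduct_self_eq_sum_norm_sq (fun i => F i j)

lemma sum_norm_sq_mulVec [Fintype m] [Fintype n] [DecidableEq n] (F : Matrix m n ℂ)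
    (g : n → ℂ) :
    ∑ i, ‖(F *ᵥ g) i‖ ^ 2 = ∑ j, ‖g j‖ ^ 2 + (star g ⬝ᵥ (Fᴴ * F - 1) *ᵥ g).re := by
  have hgram : star g ⬝ᵥ (Fᴴ * F) *ᵥ g = star (F *ᵥ g) ⬝ᵥ (F *ᵥ g) := by
    simp only [star_mulVec, dotProduct_mulVec, vecMul_vecMul]
  rw [sub_mulVec, dotProduct_sub, one_mulVec, hgram, star_dotProduct_self_eq_sum_norm_sq,
    star_dotProduct_self_eq_sum_norm_sq, ← Complex.ofReal_sub, Complex.ofReal_re]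
  ring

lemma norm_star_dotProduct_mulVec_le_of_offDiag [Fintype n] {E : Matrix n n ℂ} {μ : ℝ}
    (hdiag : ∀ j, E j j = 0) (hoff : ∀ j j', j ≠ j' → ‖E j j'‖ ≤ μ) (g : n → ℂ) :
    ‖star g ⬝ᵥ E *ᵥ g‖ ≤ μ * ((∑ j, ‖g j‖) ^ 2 - ∑ j, ‖g j‖ ^ 2) := by
  classical
  have hterm : ∀ j j', ‖g j‖ * ‖E j j'‖ * ‖g j'‖
      ≤ μ * (‖g j‖ * ‖g j'‖) - if j = j' then μ * ‖g j‖ ^ 2 else 0 := by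
    intro j j'
    by_cases h : j = j'
    · subst h
      simp [hdiag, sq]
    · rw [if_neg h, sub_zero, mul_right_comm, mul_comm μ]
      gcongr
      exact hoff j j' h
  calc ‖star g ⬝ᵥ E *ᵥ g‖ = ‖∑ j, ∑ j', star (g j) * (E j j' * g j')‖ := by
        simp only [dotProduct, mulVec, Pi.star_apply, Finset.mul_sum]
    _ ≤ ∑ j, ∑ j', ‖g j‖ * ‖E j j'‖ * ‖g j'‖ := by
        refine (norm_sum_le _ _).trans (Finset.sum_le_sum fun j _ => (norm_sum_le _ _).trans ?_)
        simp only [norm_mul, norm_star, mul_assoc, le_refl]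
    _ ≤ ∑ j, ∑ j', (μ * (‖g j‖ * ‖g j'‖) - if j = j' then μ * ‖g j‖ ^ 2 else 0) := by
        gcongr with j _ j' _
        exact hterm j j'
    _ = μ * ((∑ j, ‖g j‖) ^ 2 - ∑ j, ‖g j‖ ^ 2) := by
        simp only [Finset.sum_sub_distrib, Finset.sum_ite_eq, Finset.mem_univ, if_true, sq,
          Finset.sum_mul_sum, ← Finset.mul_sum, mul_sub]

end Matrix

theorem hasRIP_of_coherence {m n : Type*} [Fintype m] [Fintype n] [DecidableEq n]
    (F : Matrix m n ℂ) {K : ℕ} {δ μ : ℝ} (hdiag : ∀ j, (Fᴴ * F) j j = 1)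
    (hoff : ∀ j j', j ≠ j' → ‖(Fᴴ * F) j j'‖ ≤ μ) (hμ : 0 ≤ μ) (hK : μ * (K - 1) ≤ δ) :
    HasRIP F K δ := by
  rintro g ⟨s, hsK, hs⟩
  set T := ∑ j, ‖g j‖ ^ 2
  have hT : 0 ≤ T := by positivity
  have hsupport : (∑ j, ‖g j‖) ^ 2 ≤ K * T :=
    (Finset.sq_sum_le_card_mul_sum_sq_of_support fun j hj => by simp [hs j hj]).trans
      (by gcongr)
  have hcross : |(star g ⬝ᵥ (Fᴴ * F - 1) *ᵥ g).re| ≤ δ * T :=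
    calc |(star g ⬝ᵥ (Fᴴ * F - 1) *ᵥ g).re| ≤ ‖star g ⬝ᵥ (Fᴴ * F - 1) *ᵥ g‖ :=
          Complex.abs_re_le_norm _
      _ ≤ μ * ((∑ j, ‖g j‖) ^ 2 - T) :=
          norm_star_dotProduct_mulVec_le_of_offDiag (by simp [hdiag])
            (fun j j' h => by simpa [one_apply_ne h] using hoff j j' h) g
      _ ≤ μ * (K - 1) * T := by rw [mul_assoc]; gcongr; linarith
      _ ≤ δ * T := by gcongr
  rw [sum_norm_sq_mulVec]
  constructor <;> linarith [abs_le.mp hcross]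

theorem etf_rip_range_general (M N : ℕ)
    (δ : ℝ) (hδ0 : 0 ≤ δ)
    (F : Matrix (Fin M) (Fin N) ℂ)
    (hcol : ∀ n, ∑ m, ‖F m n‖ ^ 2 = 1)
    (hang : ∀ n n', n ≠ n' →
      ‖∑ m, (starRingEnd ℂ) (F m n) * F m n'‖
        = Real.sqrt (((N : ℝ) - M) / (M * ((N : ℝ) - 1)))) :
    ∀ K : ℕ, 1 ≤ K →
      (K : ℝ) ≤ 1 + δ * Real.sqrt ((M * ((N : ℝ) - 1)) / ((N : ℝ) - M)) →
      HasRIP F K δ := by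
  intro K _ hK
  rw [← inv_div] at hK
  set x := ((N : ℝ) - M) / (M * ((N : ℝ) - 1))
  refine hasRIP_of_coherence F (μ := √x) (fun j => ?_) (fun j j' h => (hang j j' h).le)
    (Real.sqrt_nonneg x) ?_
  · rw [conjTranspose_mul_self_apply_self, hcol, Complex.ofReal_one]
  · calc √x * (K - 1) ≤ √x * (δ * √x⁻¹) := by gcongr; linarith
      _ = δ * (√x * √x⁻¹) := by ring
      _ ≤ δ := mul_le_of_le_one_right hδ0 (Real.sqrt_mul_sqrt_inv_le_one x)

/-- Fix 0 ≤ δ < 1 and let f₁,…,f_N be an equiangular tight frame in ℂ^M with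
M < N: unit norms, |⟨fₙ, fₙ'⟩| = ((N−M)/(M(N−1)))^(1/2) for n ≠ n', and
F·Fᴴ = (N/M)·I.  Then F has the (K,δ)-restricted isometry property for every
positive integer K with K ≤ 1 + δ·(M(N−1)/(N−M))^(1/2). -/
theorem etf_rip_range (M N : ℕ) (hMN : M < N)
    (δ : ℝ) (hδ0 : 0 ≤ δ) (hδ1 : δ < 1)
    (F : Matrix (Fin M) (Fin N) ℂ)
    (hcol : ∀ n, ∑ m, ‖F m n‖ ^ 2 = 1)
    (hang : ∀ n n', n ≠ n' →
      ‖∑ m, (starRingEnd ℂ) (F m n) * F m n'‖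
        = Real.sqrt (((N : ℝ) - M) / (M * ((N : ℝ) - 1))))
    (htight : F * Fᴴ = (((N : ℝ) / M : ℝ) : ℂ) • 1) :
    ∀ K : ℕ, 1 ≤ K →
      (K : ℝ) ≤ 1 + δ * Real.sqrt ((M * ((N : ℝ) - 1)) / ((N : ℝ) - M)) →
      HasRIP F K δ :=
  etf_rip_range_general M N δ hδ0 F hcol hang
end

section
/- For each fixed x ∈ V, the r+1 columns of the Steiner matrix F indexed by {(x,i) : i ∈ Fin(r+1)} are linearly dependent. Consequently, there exists a nonzero vector g ∈ ℂ^{V × Fin(r+1)} with at most r+1 nonzero entries such that F·g = 0, so F does not have the (K,δ)-restricted isometry property for K = r+1 and any δ < 1; that is, the restricted isometry behavior of Steiner equiangular tight frames is no better than the worst-case-coherence bound indicates. -/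
open Matrix

/-! The blocks through a point `x` partition `V ∖ {x}` into pieces of size `k - 1`, so there are
exactly `r` of them. The `r + 1` columns of `F` at `x` are supported on the rows of these `r`
blocks, hence linearly dependent, and a dependence among them is a nonzero `(r + 1)`-sparse vector
in the kernel of `F`, which violates the lower RIP bound for every `δ < 1`. -/

open Finset

theorem not_linearIndependent_of_forall_notMem_eq_zero {ι m R : Type*} [Fintype ι] [Ring R]
    [StrongRankCondition R] (f : ι → m → R) (s : Finset m) (hs : #s < Fintype.card ι)
    (hf : ∀ i, ∀ j ∉ s, f i j = 0) : ¬ LinearIndependent R f := by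
  intro hli
  have hres : ¬ LinearIndependent R (fun i (j : s) => f i j) := fun h =>
    (h.fintype_card_le_finrank.trans_eq (by simp)).not_gt hs
  obtain ⟨c, hc, i, hi⟩ := Fintype.not_linearIndependent_iff.1 hres
  refine hi (Fintype.linearIndependent_iff.1 hli c ?_ i)
  funext j
  by_cases hj : j ∈ s
  · simpa using congrFun hc ⟨j, hj⟩
  · simp [hf _ j hj]

theorem Matrix.exists_mulVec_eq_zero_of_not_linearIndependent_cols {m α ι R : Type*}
    [Fintype α] [Fintype ι] [DecidableEq α] [CommRing R] (F : Matrix m (α × ι) R) (x : α)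
    (h : ¬ LinearIndependent R fun i => fun B => F B (x, i)) :
    ∃ g : α × ι → R, g ≠ 0 ∧
      (∃ s : Finset (α × ι), #s = Fintype.card ι ∧ ∀ p ∉ s, g p = 0) ∧ F *ᵥ g = 0 := by
  obtain ⟨c, hc, i, hi⟩ := Fintype.not_linearIndependent_iff.1 h
  refine ⟨fun p => if p.1 = x then c p.2 else 0, fun hg => hi (by simpa using congrFun hg (x, i)),
    ⟨{x} ×ˢ univ, by simp, fun ⟨a, j⟩ hp => if_neg fun hax : a = x => hp (by simp [hax])⟩, ?_⟩
  funext B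
  simpa [mulVec, dotProduct, Fintype.sum_prod_type, mul_comm] using congrFun hc B

theorem not_hasRIP_of_mulVec_eq_zero {m n : Type*} [Fintype m] [Fintype n] {F : Matrix m n ℂ}
    {K : ℕ} {δ : ℝ} (hδ : δ < 1) {g : n → ℂ} (hg : g ≠ 0)
    (hsupp : ∃ s : Finset n, #s ≤ K ∧ ∀ j ∉ s, g j = 0) (hFg : F *ᵥ g = 0) :
    ¬ HasRIP F K δ := by
  intro hRIP
  obtain ⟨j, hj⟩ := Function.ne_iff.1 hg
  have hpos : 0 < ∑ j, ‖g j‖ ^ 2 :=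
    sum_pos' (fun _ _ => by positivity) ⟨j, mem_univ _, pow_pos (norm_pos_iff.2 hj) 2⟩
  have hlow := (hRIP g hsupp).1
  simp only [hFg, Pi.zero_apply, norm_zero, ne_eq, OfNat.ofNat_ne_zero, not_false_eq_true,
    zero_pow, sum_const_zero] at hlow
  nlinarith

theorem card_filter_mem_mul_eq_card_sub_one {V : Type*} [Fintype V] [DecidableEq V]
    {𝓑 : Finset (Finset V)} {k : ℕ} (hsize : ∀ B ∈ 𝓑, #B = k) {x : V}
    (hpair : ∀ y, x ≠ y → ∃! B, B ∈ 𝓑 ∧ x ∈ B ∧ y ∈ B) :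
    #(𝓑.filter (x ∈ ·)) * (k - 1) = Fintype.card V - 1 := by
  have hcover : (𝓑.filter (x ∈ ·)).biUnion (·.erase x) = univ.erase x := by
    ext y
    simp only [mem_biUnion, mem_filter, mem_erase, mem_univ, and_true]
    constructor
    · rintro ⟨B, -, hyx, -⟩
      exact hyx
    · intro hyx
      obtain ⟨B, ⟨hB, hxB, hyB⟩, -⟩ := hpair y (Ne.symm hyx)
      exact ⟨B, ⟨hB, hxB⟩, hyx, hyB⟩
  have hdisj : ((𝓑.filter (x ∈ ·) : Finset (Finset V)) : Set (Finset V)).PairwiseDisjoint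
      (·.erase x) := by
    intro B₁ hB₁ B₂ hB₂ hne
    rw [mem_coe, mem_filter] at hB₁ hB₂
    refine disjoint_left.2 fun y hy₁ hy₂ => hne ?_
    obtain ⟨B, -, huniq⟩ := hpair y (Ne.symm (ne_of_mem_erase hy₁))
    exact (huniq B₁ ⟨hB₁.1, hB₁.2, mem_of_mem_erase hy₁⟩).trans
      (huniq B₂ ⟨hB₂.1, hB₂.2, mem_of_mem_erase hy₂⟩).symm
  rw [← card_univ, ← card_erase_of_mem (mem_univ x), ← hcover, card_biUnion hdisj,
    sum_congr rfl fun B hB => ?_, sum_const, smul_eq_mul]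
  rw [mem_filter] at hB
  rw [card_erase_of_mem hB.2, hsize B hB.1]

theorem steiner_matrix_not_RIP_general {V : Type*} [Fintype V] [DecidableEq V] (k v r : ℕ)
    (hk : 2 ≤ k) (hkv : k < v) (hcard : Fintype.card V = v)
    (𝓑 : Finset (Finset V))
    (hsize : ∀ B ∈ 𝓑, B.card = k)
    (hpair : ∀ x y : V, x ≠ y → ∃! B, B ∈ 𝓑 ∧ x ∈ B ∧ y ∈ B)
    (hr : r * (k - 1) = v - 1)
    (H : V → Matrix (Fin (r + 1)) (Fin (r + 1)) ℂ)
    (φ : V → Finset V → Fin (r + 1))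
    (F : Matrix (↥𝓑) (V × Fin (r + 1)) ℂ)
    (hF : ∀ (B : ↥𝓑) (p : V × Fin (r + 1)),
      F B p = if p.1 ∈ (B : Finset V)
        then (Real.sqrt (((k : ℝ) - 1) / ((v : ℝ) - 1)) : ℂ)
              * H p.1 (φ p.1 (B : Finset V)) p.2
        else 0) :
    (∀ x : V,
      ¬ LinearIndependent ℂ (fun i : Fin (r + 1) => fun B : ↥𝓑 => F B (x, i))) ∧
    (∃ g : V × Fin (r + 1) → ℂ, g ≠ 0 ∧
      (∃ s : Finset (V × Fin (r + 1)), s.card ≤ r + 1 ∧ ∀ p ∉ s, g p = 0) ∧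
      F.mulVec g = 0) ∧
    ∀ δ : ℝ, δ < 1 → ¬ HasRIP F (r + 1) δ := by
  have hcols (x : V) :
      ¬ LinearIndependent ℂ (fun i : Fin (r + 1) => fun B : ↥𝓑 => F B (x, i)) := by
    have hblocks : #(𝓑.filter (x ∈ ·)) = r := Nat.eq_of_mul_eq_mul_right (by omega) <|
      (card_filter_mem_mul_eq_card_sub_one hsize (hpair x)).trans (hcard ▸ hr.symm)
    refine not_linearIndependent_of_forall_notMem_eq_zero _
      ((𝓑.filter (x ∈ ·)).subtype (· ∈ 𝓑)) ?_ fun i B hB => ?_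
    · rw [card_subtype, filter_true_of_mem fun B hB => (mem_filter.1 hB).1, hblocks]
      simp
    · rw [hF, if_neg fun hxB => hB (by simpa using hxB)]
  obtain ⟨x⟩ : Nonempty V := Fintype.card_pos_iff.1 (by omega)
  obtain ⟨g, hg, ⟨s, hs, hsupp⟩, hFg⟩ :=
    F.exists_mulVec_eq_zero_of_not_linearIndependent_cols x (hcols x)
  have hsparse : ∃ s : Finset (V × Fin (r + 1)), #s ≤ r + 1 ∧ ∀ p ∉ s, g p = 0 :=
    ⟨s, (hs.trans (Fintype.card_fin _)).le, hsupp⟩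
  exact ⟨hcols, ⟨g, hg, hsparse, hFg⟩,
    fun δ hδ => not_hasRIP_of_mulVec_eq_zero hδ hg hsparse hFg⟩

/-- For each fixed x ∈ V, the r+1 columns of the Steiner matrix F indexed by
{(x,i) : i ∈ Fin (r+1)} are linearly dependent.  Consequently, there is a nonzero
vector g with at most r+1 nonzero entries such that F·g = 0, so F fails the
(r+1, δ)-restricted isometry property for every δ < 1: the RIP behavior of
Steiner equiangular tight frames is no better than the coherence bound indicates. -/
theorem steiner_matrix_not_RIP {V : Type*} [Fintype V] [DecidableEq V] (k v r : ℕ)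
    (hk : 2 ≤ k) (hkv : k < v) (hcard : Fintype.card V = v)
    (𝓑 : Finset (Finset V))
    (hsize : ∀ B ∈ 𝓑, B.card = k)
    (hpair : ∀ x y : V, x ≠ y → ∃! B, B ∈ 𝓑 ∧ x ∈ B ∧ y ∈ B)
    (hr : r * (k - 1) = v - 1)
    (H : V → Matrix (Fin (r + 1)) (Fin (r + 1)) ℂ)
    (hHuni : ∀ x i j, ‖H x i j‖ = 1)
    (hHorth : ∀ x, H x * (H x)ᴴ = ((r : ℂ) + 1) • 1)
    (φ : V → Finset V → Fin (r + 1))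
    (hφ : ∀ x : V, Set.InjOn (φ x) {B : Finset V | B ∈ 𝓑 ∧ x ∈ B})
    (F : Matrix (↥𝓑) (V × Fin (r + 1)) ℂ)
    (hF : ∀ (B : ↥𝓑) (p : V × Fin (r + 1)),
      F B p = if p.1 ∈ (B : Finset V)
        then (Real.sqrt (((k : ℝ) - 1) / ((v : ℝ) - 1)) : ℂ)
              * H p.1 (φ p.1 (B : Finset V)) p.2
        else 0) :
    (∀ x : V,
      ¬ LinearIndependent ℂ (fun i : Fin (r + 1) => fun B : ↥𝓑 => F B (x, i))) ∧
    (∃ g : V × Fin (r + 1) → ℂ, g ≠ 0 ∧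
      (∃ s : Finset (V × Fin (r + 1)), s.card ≤ r + 1 ∧ ∀ p ∉ s, g p = 0) ∧
      F.mulVec g = 0) ∧
    ∀ δ : ℝ, δ < 1 → ¬ HasRIP F (r + 1) δ :=
  steiner_matrix_not_RIP_general k v r hk hkv hcard 𝓑 hsize hpair hr H φ F hF
end
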